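/- arXiv:1512.07574 — 2 statements merged into one kernel-verified Lean document; each statement's English description precedes it below -/
import Mathlib

section
/- The average distance between distinct vertices of the incidence graph G_q equals (5q^2 + 3q + 1)/(2q^2 + 2q + 1). -/
open Projectivization

/-- Orthogonality of projective points: scalar product of representatives is zero. -/
def ortho {F : Type} [Field F] (P L : Projectivization F (Fin 3 → F)) : Prop :=
  dotProduct P.rep L.rep = 0

instance {F : Type} [Field F] [Finite F] :
    Finite (Projectivization F (Fin 3 → F)) := Quotient.finite _

noncomputable instance {F : Type} [Field F] [Fintype F] :
    Fintype (Projectivization F (Fin 3 → F)) := Fintype.ofFinite _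

/-- The incidence graph `G_q` of the projective plane over `F`. -/
def projGraph (F : Type) [Field F] :
    SimpleGraph (Bool × Projectivization F (Fin 3 → F)) where
  Adj v w := v.1 ≠ w.1 ∧ ortho v.2 w.2
  symm := ⟨by
    rintro ⟨s, P⟩ ⟨t, L⟩ ⟨h1, h2⟩
    exact ⟨h1.symm, by rwa [ortho, dotProduct_comm]⟩⟩
  loopless := ⟨by rintro ⟨s, P⟩ ⟨h, _⟩; exact h rfl⟩

/-- The modified incidence (polarity) graph `G̅_q` of the projective plane over `F`. -/
def polarityGraph (F : Type) [Field F] :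
    SimpleGraph (Projectivization F (Fin 3 → F)) where
  Adj P L := P ≠ L ∧ ortho P L
  symm := ⟨by
    rintro P L ⟨h1, h2⟩
    exact ⟨h1.symm, by rwa [ortho, dotProduct_comm]⟩⟩
  loopless := ⟨by rintro P ⟨h, _⟩; exact h rfl⟩

/-!
Any two projective points have a common perpendicular (two linear equations in three unknowns
have a nonzero solution), so two distinct vertices on the same side of `G_q` are at distance 2.
The graph is bipartite, so two vertices on opposite sides are at odd distance: 1 if they are
orthogonal and 3 otherwise. Each of the `n = q² + q + 1` points is orthogonal to exactly `q + 1`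
points (a projective line), hence every vertex has distance sum `2 (n - 1) + 3 n - 2 (q + 1)`,
which is `5 q² + 3 q + 1`, and the `2 n` vertices each have `2 n - 1 = 2 q² + 2 q + 1` partners.
-/

open scoped LinearAlgebra.Projectivization

namespace Projectivization

variable {K V : Type*} [DivisionRing K] [AddCommGroup V] [Module K V]

theorem rep_mk_mem {W : Submodule K V} {v : V} (hv : v ≠ 0) (hvW : v ∈ W) :
    (mk K v hv).rep ∈ W := by
  obtain ⟨a, ha⟩ := exists_smul_eq_mk_rep K v hv
  rw [← ha, Units.smul_def]
  exact W.smul_mem _ hvW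

theorem range_map_subtype (W : Submodule K V) :
    Set.range (map W.subtype W.injective_subtype) = {L : ℙ K V | L.rep ∈ W} := by
  ext L
  constructor
  · rintro ⟨x, rfl⟩
    induction x using ind with | h v hv =>
    exact rep_mk_mem _ v.2
  · intro hL
    exact ⟨mk K ⟨L.rep, hL⟩ (by simpa using L.rep_nonzero), mk_rep L⟩

theorem card_rep_mem (W : Submodule K V) :
    Nat.card {L : ℙ K V // L.rep ∈ W} = Nat.card (ℙ K W) := by
  rw [← Nat.card_range_of_injective (map_injective W.subtype W.injective_subtype),
    range_map_subtype]
  rfl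

theorem card_rep_mem_of_finrank_eq_two {K V : Type*} [Field K] [Finite K] [AddCommGroup V]
    [Module K V] {W : Submodule K V} (hW : Module.finrank K W = 2) :
    Nat.card {L : ℙ K V // L.rep ∈ W} = Nat.card K + 1 := by
  rw [card_rep_mem, card_of_finrank_two K W hW]

end Projectivization

section Orthogonality

variable {F : Type} [Field F]

theorem ortho_comm {P L : ℙ F (Fin 3 → F)} : ortho P L ↔ ortho L P := by
  rw [ortho, ortho, dotProduct_comm]

theorem ortho_mk_iff (P : ℙ F (Fin 3 → F)) {v : Fin 3 → F} (hv : v ≠ 0) :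
    ortho P (Projectivization.mk F v hv) ↔ P.rep ⬝ᵥ v = 0 := by
  obtain ⟨a, ha⟩ := Projectivization.exists_smul_eq_mk_rep F v hv
  rw [ortho, ← ha, Units.smul_def, dotProduct_smul, smul_eq_zero]
  simp [a.ne_zero]

theorem exists_ortho_ortho (P Q : ℙ F (Fin 3 → F)) : ∃ M, ortho P M ∧ ortho Q M := by
  classical
  -- a 3 × 3 matrix with a repeated row is singular, so it has a nonzero kernel vector
  obtain ⟨v, hv, hMv⟩ := (Matrix.of ![P.rep, Q.rep, Q.rep]).exists_mulVec_eq_zero_iff.mpr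
    (Matrix.det_zero_of_row_eq (i := 1) (j := 2) (by decide) rfl)
  refine ⟨Projectivization.mk F v hv, (ortho_mk_iff P hv).mpr ?_, (ortho_mk_iff Q hv).mpr ?_⟩
  · simpa [Matrix.mulVec] using congrFun hMv 0
  · simpa [Matrix.mulVec] using congrFun hMv 1

theorem finrank_ker_dotProduct {p : Fin 3 → F} (hp : p ≠ 0) :
    Module.finrank F (LinearMap.ker (dotProductEquiv F (Fin 3) p)) = 2 := by
  have h := Module.Dual.finrank_ker_add_one_of_ne_zero
    ((dotProductEquiv F (Fin 3)).map_ne_zero_iff.mpr hp)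
  rw [Module.finrank_fin_fun] at h
  omega

theorem card_ortho [Fintype F] (P : ℙ F (Fin 3 → F)) :
    Nat.card {L // ortho P L} = Fintype.card F + 1 := by
  have h := Projectivization.card_rep_mem_of_finrank_eq_two (K := F) (V := Fin 3 → F)
    (finrank_ker_dotProduct P.rep_nonzero)
  rw [Nat.card_eq_fintype_card (α := F)] at h
  rw [← h]
  exact Nat.card_congr (Equiv.subtypeEquivRight fun L => by simp [ortho])

theorem card_projectivization_fin_three [Fintype F] :
    Fintype.card (ℙ F (Fin 3 → F)) = Fintype.card F ^ 2 + Fintype.card F + 1 := by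
  rw [← Nat.card_eq_fintype_card, Projectivization.card_of_finrank F _ (Module.finrank_fin_fun F),
    Nat.card_eq_fintype_card]
  simp only [Finset.sum_range_succ, Finset.sum_range_zero, pow_zero, pow_one]
  ring

end Orthogonality

namespace projGraph

open SimpleGraph

variable {F : Type} [Field F]

def sideColoring : (projGraph F).Coloring Bool := Coloring.mk Prod.fst fun h => h.1

theorem even_length_iff {u v : Bool × ℙ F (Fin 3 → F)} (p : (projGraph F).Walk u v) :
    Even p.length ↔ u.1 = v.1 := by
  rw [sideColoring.even_length_iff_congr p, Bool.coe_iff_coe]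
  rfl

theorem dist_of_eq_side (s : Bool) {P Q : ℙ F (Fin 3 → F)} (hPQ : P ≠ Q) :
    (projGraph F).dist (s, P) (s, Q) = 2 := by
  obtain ⟨M, hPM, hQM⟩ := exists_ortho_ortho P Q
  have hP : (projGraph F).Adj (s, P) (!s, M) := ⟨by simp, hPM⟩
  have hQ : (projGraph F).Adj (!s, M) (s, Q) := ⟨by simp, ortho_comm.mp hQM⟩
  let w := hP.toWalk.append hQ.toWalk
  have hle : (projGraph F).dist (s, P) (s, Q) ≤ 2 := by simpa [w] using dist_le w
  obtain ⟨p, hp⟩ := w.reachable.exists_walk_length_eq_dist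
  have heven : Even p.length := (even_length_iff p).mpr rfl
  have hne : p.length ≠ 0 := fun h => hPQ (congrArg Prod.snd (p.eq_of_length_eq_zero h))
  rw [Nat.even_iff] at heven
  omega

open scoped Classical in
theorem dist_of_ne_side {s t : Bool} (hst : s ≠ t) (P Q : ℙ F (Fin 3 → F)) :
    (projGraph F).dist (s, P) (t, Q) = if ortho P Q then 1 else 3 := by
  split_ifs with hPQ
  · exact dist_eq_one_iff_adj.mpr ⟨hst, hPQ⟩
  obtain ⟨N, hQN, -⟩ := exists_ortho_ortho Q Q
  obtain ⟨M, hPM, hNM⟩ := exists_ortho_ortho P N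
  have h₁ : (projGraph F).Adj (s, P) (t, M) := ⟨hst, hPM⟩
  have h₂ : (projGraph F).Adj (t, M) (s, N) := ⟨hst.symm, ortho_comm.mp hNM⟩
  have h₃ : (projGraph F).Adj (s, N) (t, Q) := ⟨hst, ortho_comm.mp hQN⟩
  let w := h₁.toWalk.append (h₂.toWalk.append h₃.toWalk)
  have hle : (projGraph F).dist (s, P) (t, Q) ≤ 3 := by simpa [w] using dist_le w
  obtain ⟨p, hp⟩ := w.reachable.exists_walk_length_eq_dist
  have hodd : ¬ Even p.length := by rw [even_length_iff p]; exact hst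
  have hne : p.length ≠ 1 := fun h =>
    hPQ (dist_eq_one_iff_adj.mp (hp ▸ h) : (projGraph F).Adj _ _).2
  rw [Nat.even_iff] at hodd
  omega

open Finset

variable [Fintype F]

theorem sum_dist_of_eq_side (s : Bool) (P : ℙ F (Fin 3 → F)) :
    ∑ Q, (projGraph F).dist (s, P) (s, Q) = 2 * (Fintype.card (ℙ F (Fin 3 → F)) - 1) := by
  classical
  rw [← add_sum_erase _ _ (mem_univ P), dist_self, zero_add,
    sum_congr rfl fun Q hQ => dist_of_eq_side s (ne_of_mem_erase hQ).symm, sum_const,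
    card_erase_of_mem (mem_univ P), card_univ, smul_eq_mul, mul_comm]

theorem sum_dist_of_ne_side {s t : Bool} (hst : s ≠ t) (P : ℙ F (Fin 3 → F)) :
    ∑ Q, (projGraph F).dist (s, P) (t, Q) + 2 * (Fintype.card F + 1) =
      3 * Fintype.card (ℙ F (Fin 3 → F)) := by
  classical
  have hortho : #{Q | ortho P Q} = Fintype.card F + 1 := by
    rw [← Fintype.card_subtype, ← Nat.card_eq_fintype_card, card_ortho]
  have hsplit := card_filter_add_card_filter_not (s := univ) (ortho P)
  simp only [dist_of_ne_side hst, sum_ite, sum_const, smul_eq_mul, hortho, card_univ] at hsplit ⊢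
  omega

theorem sum_dist (u : Bool × ℙ F (Fin 3 → F)) :
    ∑ v, (projGraph F).dist u v = 5 * Fintype.card F ^ 2 + 3 * Fintype.card F + 1 := by
  obtain ⟨s, P⟩ := u
  have hsame := sum_dist_of_eq_side s P
  have hother := sum_dist_of_ne_side (Bool.not_ne_self s).symm P
  rw [card_projectivization_fin_three] at hsame hother
  rw [Fintype.sum_prod_type]
  cases s <;> simp only [Fintype.sum_bool, Bool.not_false, Bool.not_true] at hsame hother ⊢ <;>
    omega

end projGraph

/-- Since `dist v v = 0`, summing over all ordered pairs is the same as summing over ordered pairs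
of distinct vertices. -/
theorem projGraph_average_distance_general (q : ℕ)
    (F : Type) [Field F] [Fintype F] (hF : Fintype.card F = q) :
    (∑ u : Bool × Projectivization F (Fin 3 → F), ∑ v, ((projGraph F).dist u v : ℚ)) /
      ((Fintype.card (Bool × Projectivization F (Fin 3 → F)) : ℚ) *
        (Fintype.card (Bool × Projectivization F (Fin 3 → F)) - 1)) =
    (5 * q ^ 2 + 3 * q + 1) / (2 * q ^ 2 + 2 * q + 1) := by
  have hcard : (Fintype.card (Bool × ℙ F (Fin 3 → F)) : ℚ) = 2 * (q ^ 2 + q + 1) := by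
    rw [Fintype.card_prod, Fintype.card_bool, card_projectivization_fin_three, hF]
    push_cast
    ring
  have hsum : ∑ u : Bool × ℙ F (Fin 3 → F), ∑ v, ((projGraph F).dist u v : ℚ) =
      ∑ _u : Bool × ℙ F (Fin 3 → F), ((5 * q ^ 2 + 3 * q + 1 : ℕ) : ℚ) :=
    Finset.sum_congr rfl fun u _ => by rw [← Nat.cast_sum, projGraph.sum_dist, hF]
  rw [hsum, Finset.sum_const, Finset.card_univ, nsmul_eq_mul, hcard,
    show 2 * ((q : ℚ) ^ 2 + q + 1) - 1 = 2 * q ^ 2 + 2 * q + 1 by ring,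
    mul_div_mul_left _ _ (by positivity)]
  push_cast
  rfl

/-- The average distance between distinct vertices of the incidence graph `G_q` equals
`(5q^2 + 3q + 1)/(2q^2 + 2q + 1)`.  (Note `dist v v = 0`, so summing over all ordered pairs
is the same as summing over ordered pairs of distinct vertices.) -/
theorem projGraph_average_distance (q : ℕ) (hq : IsPrimePow q)
    (F : Type) [Field F] [Fintype F] (hF : Fintype.card F = q) :
    (∑ u : Bool × Projectivization F (Fin 3 → F), ∑ v, ((projGraph F).dist u v : ℚ)) /
      ((Fintype.card (Bool × Projectivization F (Fin 3 → F)) : ℚ) *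
        (Fintype.card (Bool × Projectivization F (Fin 3 → F)) - 1)) =
    (5 * q ^ 2 + 3 * q + 1) / (2 * q ^ 2 + 2 * q + 1) :=
  projGraph_average_distance_general q F hF
end

section
/- In the MMS (Slim Fly) graph MMS(q) with q ≡ 1 (mod 4), every vertex has degree (3q−1)/2: exactly (q−1)/2 local edges and q global edges. -/
/-!
Since `q ≡ 1 (mod 4)`, `-1` is a square, so `y₁ - y₂ ∈ X_s` is a symmetric relation and the
local neighbours of `(s, x, y)` are exactly the `(s, x, y - a)` with `a ∈ X_s`; multiplication by
a fixed nonsquare maps `X_0` onto `X_1`, so each has `(q - 1) / 2` elements. A global neighbour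
of `(s, x, y)` lies on the other side and is determined by its middle coordinate, which can be
anything, so there are `q` of them.
-/

/-- `X_0` is the set of nonzero squares of `F` and `X_1` the set of nonsquares. -/
def mmsX (F : Type) [Field F] : Bool → Set F
  | false => {a : F | a ≠ 0 ∧ IsSquare a}
  | true => {a : F | a ≠ 0 ∧ ¬IsSquare a}

/-- The McKay–Miller–Širáň (Slim Fly) graph `MMS(q)` on vertex set `{0,1} × F_q × F_q`:
local edges join `(s,x,y₁)` and `(s,x,y₂)` when `y₁ - y₂ ∈ X_s`; global edges join
`(0,x₁,y₁)` and `(1,x₂,y₂)` when `y₁ - y₂ = x₁x₂`. -/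
def mmsGraph (F : Type) [Field F] : SimpleGraph (Bool × F × F) :=
  SimpleGraph.fromRel (fun v w =>
    (v.1 = w.1 ∧ v.2.1 = w.2.1 ∧ v.2.2 - w.2.2 ∈ mmsX F v.1) ∨
    (v.1 = false ∧ w.1 = true ∧ v.2.2 - w.2.2 = v.2.1 * w.2.1))

theorem SimpleGraph.card_adj_and_add_card_adj_and_not {V : Type*} [Finite V]
    (G : SimpleGraph V) (v : V) (P : V → Prop) :
    Nat.card {w | G.Adj v w ∧ P w} + Nat.card {w | G.Adj v w ∧ ¬P w} =
      Nat.card (G.neighborSet v) := by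
  simp only [Nat.card_coe_set_eq]
  exact Set.ncard_inter_add_ncard_sdiff_eq_ncard (G.neighborSet v) {w | P w}

theorem FiniteField.isSquare_mul_of_not_isSquare {F : Type*} [Field F] [Fintype F]
    {a b : F} (ha : ¬IsSquare a) (hb : ¬IsSquare b) :
    IsSquare (a * b) := by
  classical
  have hab : a * b ≠ 0 := mul_ne_zero (fun h => ha (h ▸ .zero)) (fun h => hb (h ▸ .zero))
  rw [← quadraticChar_one_iff_isSquare hab, map_mul,
    quadraticChar_neg_one_iff_not_isSquare.mpr ha, quadraticChar_neg_one_iff_not_isSquare.mpr hb]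
  norm_num

section

variable {F : Type} [Field F]

theorem ne_zero_of_mem_mmsX {s : Bool} {a : F} (ha : a ∈ mmsX F s) : a ≠ 0 := by
  cases s <;> exact ha.1

theorem neg_mem_mmsX_iff (hneg : IsSquare (-1 : F)) {s : Bool} {a : F} :
    -a ∈ mmsX F s ↔ a ∈ mmsX F s := by
  have hsq : IsSquare (-a) ↔ IsSquare a :=
    ⟨fun h => by simpa using hneg.mul h, fun h => by simpa using hneg.mul h⟩
  cases s <;> simp [mmsX, hsq]

theorem mmsX_false_union_mmsX_true : mmsX F false ∪ mmsX F true = {0}ᶜ := by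
  ext a
  simp only [mmsX, Set.mem_union, Set.mem_ofPred_eq, Set.mem_compl_iff, Set.mem_singleton_iff]
  tauto

theorem disjoint_mmsX_false_mmsX_true : Disjoint (mmsX F false) (mmsX F true) :=
  Set.disjoint_left.2 fun _ ha hb => hb.2 ha.2

theorem mmsGraph_adj_of_fst_eq (hneg : IsSquare (-1 : F)) {s : Bool} {x y x' y' : F} :
    (mmsGraph F).Adj (s, x, y) (s, x', y') ↔ x = x' ∧ y - y' ∈ mmsX F s := by
  have hswap : y' - y ∈ mmsX F s ↔ y - y' ∈ mmsX F s := by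
    rw [← neg_sub, neg_mem_mmsX_iff hneg]
  simp only [mmsGraph, SimpleGraph.fromRel_adj, ne_eq, Prod.mk.injEq, hswap, eq_comm (a := x')]
  constructor
  · rintro ⟨-, (h | ⟨rfl, h⟩) | (h | ⟨rfl, h⟩)⟩ <;> simp_all
  · rintro ⟨rfl, h⟩
    exact ⟨fun ⟨_, _, hy⟩ => ne_zero_of_mem_mmsX h (sub_eq_zero.2 hy), by simp [h]⟩

theorem mmsGraph_adj_false_true {x y x' y' : F} :
    (mmsGraph F).Adj (false, x, y) (true, x', y') ↔ y - y' = x * x' := by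
  simp [mmsGraph]

theorem mmsGraph_localNbrs_eq_image (hneg : IsSquare (-1 : F)) (v : Bool × F × F) :
    {w | (mmsGraph F).Adj v w ∧ w.1 = v.1} =
      (fun a => (v.1, v.2.1, v.2.2 - a)) '' mmsX F v.1 := by
  obtain ⟨s, x, y⟩ := v
  ext ⟨t, x', y'⟩
  simp only [Set.mem_ofPred_eq, Set.mem_image, Prod.mk.injEq]
  constructor
  · rintro ⟨hadj, rfl⟩
    obtain ⟨rfl, h⟩ := (mmsGraph_adj_of_fst_eq hneg).1 hadj
    exact ⟨y - y', h, rfl, rfl, sub_sub_cancel y y'⟩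
  · rintro ⟨a, ha, rfl, rfl, rfl⟩
    exact ⟨(mmsGraph_adj_of_fst_eq hneg).2 ⟨rfl, by simpa⟩, rfl⟩

theorem mmsGraph_globalNbrs_false (x y : F) :
    {w | (mmsGraph F).Adj (false, x, y) w ∧ w.1 ≠ false} =
      Set.range fun t => (true, t, y - x * t) := by
  ext ⟨_ | _, x', y'⟩
  · simp
  · simp only [Set.mem_ofPred_eq, mmsGraph_adj_false_true, Set.mem_range, Prod.mk.injEq]
    constructor
    · rintro ⟨h, -⟩
      exact ⟨x', trivial, rfl, by rw [← h]; ring⟩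
    · rintro ⟨_, -, rfl, rfl⟩
      exact ⟨by ring, by simp⟩

theorem mmsGraph_globalNbrs_true (x y : F) :
    {w | (mmsGraph F).Adj (true, x, y) w ∧ w.1 ≠ true} =
      Set.range fun t => (false, t, y + t * x) := by
  ext ⟨_ | _, x', y'⟩
  · simp only [Set.mem_ofPred_eq, SimpleGraph.adj_comm _ (true, x, y), mmsGraph_adj_false_true,
      Set.mem_range, Prod.mk.injEq]
    constructor
    · rintro ⟨h, -⟩
      exact ⟨x', trivial, rfl, by rw [← h]; ring⟩
    · rintro ⟨_, -, rfl, rfl⟩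
      exact ⟨by ring, by simp⟩
  · simp

section Finite

variable [Fintype F]

theorem mmsX_true_eq_image {u : F} (hu : ¬IsSquare u) :
    mmsX F true = (u * ·) '' mmsX F false := by
  have hu0 : u ≠ 0 := fun h => hu (h ▸ .zero)
  ext b
  constructor
  · rintro ⟨hb0, hb⟩
    refine ⟨u⁻¹ * b, ⟨by simp [hu0, hb0], ?_⟩, by field_simp⟩
    exact FiniteField.isSquare_mul_of_not_isSquare (fun h => hu (by simpa using h.inv)) hb
  · rintro ⟨a, ⟨ha0, ha⟩, rfl⟩
    refine ⟨mul_ne_zero hu0 ha0, fun h => hu ?_⟩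
    simpa [ha0] using h.mul ha.inv

theorem card_mmsX (hF : ringChar F ≠ 2) (s : Bool) :
    Nat.card (mmsX F s) = (Fintype.card F - 1) / 2 := by
  obtain ⟨u, hu⟩ := FiniteField.exists_nonsquare hF
  have hcard : Nat.card (mmsX F true) = Nat.card (mmsX F false) := by
    rw [mmsX_true_eq_image hu, Nat.card_image_of_injective (mul_right_injective₀ ?_)]
    exact fun h => hu (h ▸ .zero)
  have hsum : Nat.card (mmsX F false) + Nat.card (mmsX F true) = Fintype.card F - 1 := by
    simp only [Nat.card_coe_set_eq]
    rw [← Set.ncard_union_eq disjoint_mmsX_false_mmsX_true, mmsX_false_union_mmsX_true,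
      Set.ncard_compl, Set.ncard_singleton, Nat.card_eq_fintype_card]
  cases s <;> omega

theorem card_mmsGraph_localNbrs (hneg : IsSquare (-1 : F)) (hF : ringChar F ≠ 2)
    (v : Bool × F × F) :
    Nat.card {w | (mmsGraph F).Adj v w ∧ w.1 = v.1} = (Fintype.card F - 1) / 2 := by
  rw [mmsGraph_localNbrs_eq_image hneg, Nat.card_image_of_injective, card_mmsX hF]
  exact fun a b h => sub_right_injective (congrArg (·.2.2) h)

theorem card_mmsGraph_globalNbrs (v : Bool × F × F) :
    Nat.card {w | (mmsGraph F).Adj v w ∧ w.1 ≠ v.1} = Fintype.card F := by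
  obtain ⟨_ | _, x, y⟩ := v
  · rw [mmsGraph_globalNbrs_false, Nat.card_range_of_injective, Nat.card_eq_fintype_card]
    exact fun a b h => congrArg (·.2.1) h
  · rw [mmsGraph_globalNbrs_true, Nat.card_range_of_injective, Nat.card_eq_fintype_card]
    exact fun a b h => congrArg (·.2.1) h

end Finite

end

theorem mmsGraph_degrees_general (q : ℕ) (hq4 : q % 4 = 1)
    (F : Type) [Field F] [Fintype F] (hF : Fintype.card F = q) :
    ∀ v : Bool × F × F,
      Nat.card {w | (mmsGraph F).Adj v w ∧ w.1 = v.1} = (q - 1) / 2 ∧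
      Nat.card {w | (mmsGraph F).Adj v w ∧ w.1 ≠ v.1} = q ∧
      Nat.card ((mmsGraph F).neighborSet v) = (3 * q - 1) / 2 := by
  have hchar : ringChar F ≠ 2 := fun h => by
    have := FiniteField.even_card_of_char_two h
    omega
  have hneg : IsSquare (-1 : F) := FiniteField.isSquare_neg_one_iff.2 (by omega)
  intro v
  have hlocal := card_mmsGraph_localNbrs hneg hchar v
  have hglobal := card_mmsGraph_globalNbrs v
  rw [hF] at hlocal hglobal
  refine ⟨hlocal, hglobal, ?_⟩
  rw [← (mmsGraph F).card_adj_and_add_card_adj_and_not v (·.1 = v.1), hlocal, hglobal]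
  omega

/-- In `MMS(q)` with `q ≡ 1 (mod 4)`, every vertex has degree `(3q-1)/2`: exactly
`(q-1)/2` local edges and `q` global edges. -/
theorem mmsGraph_degrees (q : ℕ) (hq : IsPrimePow q) (hq4 : q % 4 = 1)
    (F : Type) [Field F] [Fintype F] (hF : Fintype.card F = q) :
    ∀ v : Bool × F × F,
      Nat.card {w | (mmsGraph F).Adj v w ∧ w.1 = v.1} = (q - 1) / 2 ∧
      Nat.card {w | (mmsGraph F).Adj v w ∧ w.1 ≠ v.1} = q ∧
      Nat.card ((mmsGraph F).neighborSet v) = (3 * q - 1) / 2 :=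
  mmsGraph_degrees_general q hq4 F hF
end
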